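/- arXiv:1812.05125 — 2 statements merged into one kernel-verified Lean document; each statement's English description precedes it below -/
import Mathlib

section
/- Let G be a graph in the class F (every minimum vertex cover of G containing all cut vertices induces a connected subgraph), with at least two vertices, and let X be the set of cut vertices of G. Then evc(G) = mvc(G) if and only if for every vertex v ∈ V(G) \ X there exists a minimum vertex cover S_v of G with X ∪ {v} ⊆ S_v. -/
/-!
If `evc G = mvc G`, every configuration `S` of an optimal eternal class contains every cut
vertex `x`. Otherwise, for each side `R` of `G - x`, defending an attack on an edge from `x`
into `R` pulls a guard out of `R`, so some configuration covers the edges inside `R` with fewer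
guards than `S` has on `R`; these two partial covers together with `x` form a vertex cover
smaller than `mvc G`. Hence the configuration occupying `v` after an attack at `v` is the
required cover.

Conversely, the minimum covers containing the cut vertices form an eternal class. To answer an
attack from `u ∈ S` towards `v ∉ S`, take a minimum cover `T` containing the cut vertices and
`v`, as close to `S` as possible, and match `S \ {u}` into `T \ {v}` along closed
neighbourhoods by Hall's theorem: a Hall violator `A` can be exchanged for its neighbours in
`T`, and since `G[S]` is connected the resulting cover is either smaller than `mvc G` or closer
to `S` than `T`.
-/

namespace EVC

open SimpleGraph

variable {V : Type*}

/-- `S` is a vertex cover of `G`. -/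
def IsVC (G : SimpleGraph V) (S : Set V) : Prop :=
  ∀ ⦃u v : V⦄, G.Adj u v → u ∈ S ∨ v ∈ S

/-- The minimum vertex cover number of `G`. -/
noncomputable def mvc (G : SimpleGraph V) : ℕ :=
  sInf {k | ∃ S : Set V, IsVC G S ∧ S.ncard = k}

/-- The minimum size of a vertex cover of `G` containing all vertices of `U`. -/
noncomputable def mvcOn (G : SimpleGraph V) (U : Set V) : ℕ :=
  sInf {k | ∃ S : Set V, IsVC G S ∧ U ⊆ S ∧ S.ncard = k}

/-- Configuration `S'` is obtained from configuration `S` by a legal move of the guards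
defending an attack on the edge `uv`: each guard stays or moves to an adjacent vertex
(at most one guard per vertex), and some guard moves across the attacked edge `uv`. -/
def Defends (G : SimpleGraph V) (S S' : Set V) (u v : V) : Prop :=
  ∃ f : V → V, Set.BijOn f S S' ∧ (∀ w ∈ S, f w = w ∨ G.Adj w (f w)) ∧
    ((u ∈ S ∧ f u = v) ∨ (v ∈ S ∧ f v = u))

/-- `C` is an eternal vertex cover class of `G` with `k` guards, each configuration being a
vertex cover of size `k` containing `U`: from each configuration, every attack on an edge
can be defended by a legal move to another configuration in `C`. -/
def IsEvcClassOn (G : SimpleGraph V) (U : Set V) (k : ℕ) (C : Set (Set V)) : Prop :=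
  C.Nonempty ∧ (∀ S ∈ C, IsVC G S ∧ U ⊆ S ∧ S.ncard = k) ∧
    ∀ S ∈ C, ∀ u v : V, G.Adj u v → ∃ S' ∈ C, Defends G S S' u v

/-- An eternal vertex cover class with no constraint on occupied vertices. -/
def IsEvcClass (G : SimpleGraph V) (k : ℕ) (C : Set (Set V)) : Prop :=
  IsEvcClassOn G ∅ k C

/-- `evc_U(G)` : the minimum `k` admitting an eternal vertex cover class all of whose
configurations contain `U`. -/
noncomputable def evcOn (G : SimpleGraph V) (U : Set V) : ℕ :=
  sInf {k | ∃ C : Set (Set V), IsEvcClassOn G U k C}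

/-- The eternal vertex cover number of `G`. -/
noncomputable def evc (G : SimpleGraph V) : ℕ := evcOn G ∅

/-- `x` is a cut vertex of the connected graph `G`. -/
def IsCutVertex (G : SimpleGraph V) (x : V) : Prop :=
  G.Connected ∧ ¬ (G.induce {v : V | v ≠ x}).Connected

/-- The set of cut vertices of `G`. -/
def cutVertices (G : SimpleGraph V) : Set V := {x | IsCutVertex G x}

/-- `G` is locally connected: every open neighborhood induces a connected subgraph. -/
def LocallyConnected (G : SimpleGraph V) : Prop :=
  ∀ v : V, (G.induce (G.neighborSet v)).Connected

end EVC

namespace EVC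

open SimpleGraph

variable {V : Type*} {G : SimpleGraph V}

theorem IsVC.mono {S T : Set V} (hS : IsVC G S) (hST : S ⊆ T) : IsVC G T :=
  fun _ _ huv => (hS huv).imp (@hST _) (@hST _)

theorem mvc_le_ncard {S : Set V} (hS : IsVC G S) : mvc G ≤ S.ncard :=
  Nat.sInf_le ⟨S, hS, rfl⟩

theorem Defends.symm {S S' : Set V} {u v : V} (h : Defends G S S' u v) : Defends G S S' v u :=
  let ⟨f, hbij, hmove, hcross⟩ := h
  ⟨f, hbij, hmove, hcross.symm⟩

theorem Defends.mem_or_mem {S S' : Set V} {u v : V} (h : Defends G S S' u v) :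
    v ∈ S ∨ v ∈ S' := by
  obtain ⟨f, hbij, -, ⟨hu, rfl⟩ | ⟨hv, -⟩⟩ := h
  · exact Or.inr (hbij.mapsTo hu)
  · exact Or.inl hv

theorem defends_self {S : Set V} {u v : V} (huv : G.Adj u v) (hu : u ∈ S) (hv : v ∈ S) :
    Defends G S S u v := by
  classical
  refine ⟨Equiv.swap u v, Equiv.swap_bijOn_self (iff_of_true hu hv), fun w _ => ?_,
    Or.inl ⟨hu, Equiv.swap_apply_left u v⟩⟩
  rcases eq_or_ne w u with rfl | hwu
  · exact Or.inr (by simpa using huv)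
  rcases eq_or_ne w v with rfl | hwv
  · exact Or.inr (by simpa using huv.symm)
  · exact Or.inl (Equiv.swap_apply_of_ne_of_ne hwu hwv)

theorem isEvcClass_univ (G : SimpleGraph V) :
    IsEvcClass G (Set.univ : Set V).ncard {Set.univ} := by
  refine ⟨Set.singleton_nonempty _, ?_, ?_⟩
  · rintro S rfl
    exact ⟨fun u _ _ => Or.inl trivial, Set.empty_subset _, rfl⟩
  · rintro S rfl u v huv
    exact ⟨Set.univ, rfl, defends_self huv trivial trivial⟩

theorem exists_isEvcClass_evc (G : SimpleGraph V) : ∃ C, IsEvcClass G (evc G) C :=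
  Nat.sInf_mem (s := {k | ∃ C, IsEvcClassOn G ∅ k C}) ⟨_, _, isEvcClass_univ G⟩

theorem evc_le_of_isEvcClass {k : ℕ} {C : Set (Set V)} (hC : IsEvcClass G k C) : evc G ≤ k :=
  Nat.sInf_le ⟨C, hC⟩

theorem IsEvcClassOn.mvc_le {U : Set V} {k : ℕ} {C : Set (Set V)} (hC : IsEvcClassOn G U k C) :
    mvc G ≤ k := by
  obtain ⟨⟨S, hS⟩, hcov, -⟩ := hC
  obtain ⟨hSvc, -, rfl⟩ := hcov S hS
  exact mvc_le_ncard hSvc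

theorem mvc_le_evc (G : SimpleGraph V) : mvc G ≤ evc G := by
  obtain ⟨C, hC⟩ := exists_isEvcClass_evc G
  exact hC.mvc_le

theorem IsEvcClassOn.exists_mem_of_adj {U : Set V} {k : ℕ} {C : Set (Set V)}
    (hC : IsEvcClassOn G U k C) {u v : V} (huv : G.Adj u v) : ∃ S ∈ C, v ∈ S := by
  obtain ⟨⟨S, hS⟩, -, hdef⟩ := hC
  obtain ⟨S', hS', hmove⟩ := hdef S hS u v huv
  exact hmove.mem_or_mem.elim (fun h => ⟨S, hS, h⟩) (fun h => ⟨S', hS', h⟩)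

/-- `P` is a union of connected components of `G - x`. -/
def IsSideOf (G : SimpleGraph V) (x : V) (P : Set V) : Prop :=
  x ∉ P ∧ ∀ ⦃s r : V⦄, G.Adj s r → r ∈ P → s = x ∨ s ∈ P

theorem IsSideOf.compl {x : V} {P : Set V} (hP : IsSideOf G x P) :
    IsSideOf G x (insert x P)ᶜ := by
  refine ⟨fun h => h (Set.mem_insert x P), fun s r hsr hr => ?_⟩
  by_contra! h
  have hsP : s ∈ P := (Set.mem_insert_iff.mp (not_not.mp h.2)).resolve_left h.1
  exact hr (Set.mem_insert_iff.mpr ((hP.2 hsr.symm hsP)))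

theorem IsSideOf.exists_adj {x : V} {P : Set V} (hconn : G.Connected) (hP : IsSideOf G x P)
    (hne : P.Nonempty) : ∃ w ∈ P, G.Adj x w := by
  obtain ⟨p, hp⟩ := hne
  obtain ⟨d, -, hd, hdx⟩ := (hconn.preconnected p x).some.exists_boundary_dart P hp hP.1
  have hx : d.snd = x := (hP.2 d.adj.symm hd).resolve_right hdx
  exact ⟨d.fst, hd, hx ▸ d.adj.symm⟩

theorem exists_isSideOf_of_mem_cutVertices [Nontrivial V] {x : V} (hx : x ∈ cutVertices G) :
    ∃ P, IsSideOf G x P ∧ P.Nonempty ∧ (insert x P)ᶜ.Nonempty := by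
  set H := G.induce {v | v ≠ x}
  obtain ⟨y, hy⟩ := exists_ne x
  have hH : ¬ H.Preconnected := fun h => hx.2 ((connected_iff H).mpr ⟨h, ⟨⟨y, hy⟩⟩⟩)
  simp only [Preconnected, not_forall] at hH
  obtain ⟨⟨a, ha⟩, ⟨b, hb⟩, hab⟩ := hH
  refine ⟨{w | ∃ hw : w ≠ x, H.Reachable ⟨a, ha⟩ ⟨w, hw⟩}, ⟨fun h => h.1 rfl, ?_⟩,
    ⟨a, ha, Reachable.rfl⟩, ⟨b, ?_⟩⟩
  · rintro s r hsr ⟨hr, hreach⟩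
    by_cases hs : s = x
    · exact Or.inl hs
    · exact Or.inr ⟨hs, hreach.trans (Adj.reachable (G := H) hsr.symm)⟩
  · rintro (rfl | h)
    · exact hb rfl
    · exact hab h.2

theorem Defends.ncard_inter_lt [Finite V] {S S' P : Set V} {x w : V}
    (h : Defends G S S' x w) (hxS : x ∉ S) (hP : IsSideOf G x P) (hwP : w ∈ P) :
    (S' ∩ P).ncard < (S ∩ P).ncard := by
  obtain ⟨f, hbij, hmove, hcross⟩ := h
  obtain ⟨hwS, hfw⟩ := hcross.resolve_left fun h => hxS h.1
  have hsub : S' ∩ P ⊆ f '' ((S ∩ P) \ {w}) := by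
    rintro _ ⟨hy, hyP⟩
    obtain ⟨s, hs, rfl⟩ := hbij.image_eq ▸ hy
    have hsP : s ∈ P := by
      rcases hmove s hs with hfs | hadj
      · rwa [hfs] at hyP
      · exact (hP.2 hadj hyP).resolve_left fun h => hxS (h ▸ hs)
    exact ⟨s, ⟨⟨hs, hsP⟩, fun h => hP.1 (hfw ▸ (Set.mem_singleton_iff.mp h) ▸ hyP)⟩, rfl⟩
  calc (S' ∩ P).ncard ≤ (f '' ((S ∩ P) \ {w})).ncard := Set.ncard_le_ncard hsub
    _ ≤ ((S ∩ P) \ {w}).ncard := Set.ncard_image_le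
    _ < (S ∩ P).ncard := Set.ncard_sdiff_singleton_lt_of_mem ⟨hwS, hwP⟩

theorem IsSideOf.isVC_insert_union {x : V} {P S₁ S₂ : Set V} (hP : IsSideOf G x P)
    (h₁ : IsVC G S₁) (h₂ : IsVC G S₂) :
    IsVC G (insert x ((S₁ ∩ P) ∪ (S₂ ∩ (insert x P)ᶜ))) := by
  intro a b hab
  rcases eq_or_ne a x with rfl | ha
  · exact Or.inl (Set.mem_insert _ _)
  rcases eq_or_ne b x with rfl | hb
  · exact Or.inr (Set.mem_insert _ _)
  by_cases haP : a ∈ P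
  · have hbP : b ∈ P := (hP.2 hab.symm haP).resolve_left hb
    exact (h₁ hab).imp (fun h => Or.inr (Or.inl ⟨h, haP⟩)) (fun h => Or.inr (Or.inl ⟨h, hbP⟩))
  · have haQ : a ∈ (insert x P)ᶜ := by simp [ha, haP]
    have hbQ : b ∈ (insert x P)ᶜ := (hP.compl.2 hab.symm haQ).resolve_left hb
    exact (h₂ hab).imp (fun h => Or.inr (Or.inr ⟨h, haQ⟩)) (fun h => Or.inr (Or.inr ⟨h, hbQ⟩))

theorem cutVertices_subset_of_mem [Finite V] [Nontrivial V] (hconn : G.Connected) {U : Set V}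
    {C : Set (Set V)} (hC : IsEvcClassOn G U (mvc G) C) {S : Set V} (hS : S ∈ C) :
    cutVertices G ⊆ S := by
  intro x hx
  by_contra hxS
  obtain ⟨P, hP, hPne, hQne⟩ := exists_isSideOf_of_mem_cutVertices hx
  have side : ∀ R, IsSideOf G x R → R.Nonempty →
      ∃ S' ∈ C, (S' ∩ R).ncard < (S ∩ R).ncard := by
    intro R hR hRne
    obtain ⟨w, hwR, hxw⟩ := hR.exists_adj hconn hRne
    obtain ⟨S', hS', hmove⟩ := hC.2.2 S hS x w hxw
    exact ⟨S', hS', hmove.ncard_inter_lt hxS hR hwR⟩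
  obtain ⟨S₁, hS₁, hlt₁⟩ := side P hP hPne
  obtain ⟨S₂, hS₂, hlt₂⟩ := side _ hP.compl hQne
  have hcover := hP.isVC_insert_union (hC.2.1 S₁ hS₁).1 (hC.2.1 S₂ hS₂).1
  rw [← Set.sdiff_eq S, Set.sdiff_insert_of_notMem hxS] at hlt₂
  have hmvc := mvc_le_ncard hcover
  have hinsert := Set.ncard_insert_le x ((S₁ ∩ P) ∪ (S₂ ∩ (insert x P)ᶜ))
  have hunion := Set.ncard_union_le (S₁ ∩ P) (S₂ ∩ (insert x P)ᶜ)
  have hsplit := Set.ncard_inter_add_ncard_sdiff_eq_ncard S P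
  have hScard := (hC.2.1 S hS).2.2
  omega

theorem exists_injective_of_hall {α β : Type*} [Finite β] {s : Set α} (t : α → Set β)
    (h : ∀ A ⊆ s, A.ncard ≤ (⋃ a ∈ A, t a).ncard) :
    ∃ g : s → β, Function.Injective g ∧ ∀ a : s, g a ∈ t a := by
  classical
  let t' : s → Finset β := fun a => (t a).toFinite.toFinset
  obtain ⟨g, hg, hgt⟩ := (Finset.all_card_le_biUnion_card_iff_exists_injective t').mp fun s' => by
    have hA : (Subtype.val '' (s' : Set s)).ncard = s'.card := by
      rw [Set.ncard_image_of_injective _ Subtype.val_injective, Set.ncard_coe_finset]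
    have hB : (⋃ a ∈ Subtype.val '' (s' : Set s), t a) = ↑(s'.biUnion t') := by
      ext y
      simp [t']
    rw [← hA, ← Set.ncard_coe_finset, ← hB]
    exact h _ (by simp)
  exact ⟨g, hg, fun a => by simpa [t'] using hgt a⟩

def closedNbhd (G : SimpleGraph V) (A : Set V) : Set V := ⋃ a ∈ A, insert a (G.neighborSet a)

theorem IsVC.sdiff_union_inter_closedNbhd {S T : Set V} (hS : IsVC G S) (hT : IsVC G T)
    (A : Set V) : IsVC G ((S \ A) ∪ (T ∩ closedNbhd G A)) := by
  have key : ∀ ⦃a b⦄, G.Adj a b → a ∈ S →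
      a ∈ (S \ A) ∪ (T ∩ closedNbhd G A) ∨ b ∈ (S \ A) ∪ (T ∩ closedNbhd G A) := by
    intro a b hab ha
    by_cases haA : a ∈ A
    · have hNa : a ∈ closedNbhd G A := Set.mem_biUnion haA (Set.mem_insert a _)
      have hNb : b ∈ closedNbhd G A := Set.mem_biUnion haA (Set.mem_insert_of_mem a hab)
      exact (hT hab).imp (fun h => Or.inr ⟨h, hNa⟩) (fun h => Or.inr ⟨h, hNb⟩)
    · exact Or.inl (Or.inl ⟨ha, haA⟩)
  intro a b hab
  exact (hS hab).elim (key hab) (fun hb => (key hab.symm hb).symm)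

theorem defends_of_hall [Finite V] {S T : Set V} {u v : V} (hcard : S.ncard = T.ncard)
    (huv : G.Adj u v) (hu : u ∈ S) (hv : v ∈ T)
    (hall : ∀ A ⊆ S \ {u}, A.ncard ≤ ((T \ {v}) ∩ closedNbhd G A).ncard) :
    Defends G S T u v := by
  classical
  obtain ⟨g, hg, hgt⟩ := exists_injective_of_hall
    (fun a => (T \ {v}) ∩ insert a (G.neighborSet a)) fun A hA => by
      simpa only [closedNbhd, Set.inter_iUnion₂] using hall A hA
  let f : V → V := fun w => if h : w ∈ S \ {u} then g ⟨w, h⟩ else v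
  have hfu : f u = v := dif_neg fun h => h.2 rfl
  have hfg : ∀ w (h : w ∈ S \ {u}), f w = g ⟨w, h⟩ := fun w h => dif_pos h
  have hmaps : Set.MapsTo f S T := by
    intro w hw
    by_cases hwu : w = u
    · exact hwu ▸ hfu ▸ hv
    · exact hfg w ⟨hw, hwu⟩ ▸ (hgt _).1.1
  have hinj : Set.InjOn f S := by
    have hgv : ∀ w (h : w ∈ S \ {u}), f w ≠ v := fun w h => hfg w h ▸ (hgt _).1.2
    intro w₁ h₁ w₂ h₂ heq
    by_cases hw₁ : w₁ = u <;> by_cases hw₂ : w₂ = u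
    · exact hw₁.trans hw₂.symm
    · exact absurd (heq ▸ hw₁ ▸ hfu) (hgv w₂ ⟨h₂, hw₂⟩)
    · exact absurd (heq.symm ▸ hw₂ ▸ hfu) (hgv w₁ ⟨h₁, hw₁⟩)
    · rw [hfg w₁ ⟨h₁, hw₁⟩, hfg w₂ ⟨h₂, hw₂⟩] at heq
      exact congrArg Subtype.val (hg heq)
  have himage : f '' S = T :=
    Set.eq_of_subset_of_ncard_le hmaps.image_subset (by rw [hinj.ncard_image, hcard])
  refine ⟨f, ⟨hmaps, hinj, himage.symm ▸ Set.surjOn_image f S⟩, fun w hw => ?_,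
    Or.inl ⟨hu, hfu⟩⟩
  by_cases hwu : w = u
  · exact Or.inr (hwu ▸ hfu ▸ huv)
  · rw [hfg w ⟨hw, hwu⟩]
    rcases (hgt ⟨w, hw, hwu⟩).2 with h | h
    · exact Or.inl h
    · exact Or.inr h

theorem exists_adj_sdiff_of_induce_connected {S A : Set V} (hS : (G.induce S).Connected)
    (hAS : A ⊆ S) {a b : V} (ha : a ∈ A) (hb : b ∈ S \ A) : ∃ p ∈ A, ∃ q ∈ S \ A, G.Adj p q := by
  obtain ⟨d, -, hd, hd'⟩ := (hS.preconnected ⟨a, hAS ha⟩ ⟨b, hb.1⟩).some.exists_boundary_dart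
    {z | z.1 ∈ A} ha hb.2
  exact ⟨d.fst, hd, d.snd, ⟨d.snd.2, hd'⟩, d.adj⟩

theorem hall_of_sdiff_minimal [Finite V] {S T U : Set V} {u v : V} (hS : IsVC G S)
    (hScard : S.ncard = mvc G) (hSconn : (G.induce S).Connected) (hu : u ∈ S) (hv : v ∉ S)
    (hUS : U ⊆ S) (hT : IsVC G T) (hUT : U ∪ {v} ⊆ T)
    (hmin : ∀ T', IsVC G T' → T'.ncard = mvc G → U ∪ {v} ⊆ T' →
      (S \ T).ncard ≤ (S \ T').ncard) :
    ∀ A ⊆ S \ {u}, A.ncard ≤ ((T \ {v}) ∩ closedNbhd G A).ncard := by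
  intro A hA
  by_contra! hlt
  have hAS : A ⊆ S := hA.trans Set.sdiff_subset
  set B := (T \ {v}) ∩ closedNbhd G A
  set S₁ := insert v ((S \ A) ∪ B)
  have hTB : ∀ y ∈ T, y ∈ closedNbhd G A → y ∈ S₁ := by
    intro y hyT hyN
    by_cases hyv : y = v
    · exact hyv ▸ Set.mem_insert v _
    · exact Set.mem_insert_of_mem v (Or.inr ⟨⟨hyT, hyv⟩, hyN⟩)
  have hAT : ∀ y ∈ A, y ∈ T → y ∈ S₁ := fun y hy hyT =>
    hTB y hyT (Set.mem_biUnion hy (Set.mem_insert y _))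
  have hS₁ : IsVC G S₁ := (hS.sdiff_union_inter_closedNbhd hT A).mono
    (Set.union_subset (fun y hy => Set.mem_insert_of_mem v (Or.inl hy)) fun y hy => hTB y hy.1 hy.2)
  have hcount : S₁.ncard + ((S \ A) ∩ B).ncard ≤ S.ncard := by
    have h₁ : S₁.ncard ≤ ((S \ A) ∪ B).ncard + 1 := Set.ncard_insert_le _ _
    have h₂ := Set.ncard_union_add_ncard_inter (S \ A) B
    have h₃ := Set.ncard_sdiff_add_ncard_of_subset hAS
    omega
  have hmvc := mvc_le_ncard hS₁
  have hdisj : (S \ A) ∩ B = ∅ := by rw [← Set.ncard_eq_zero]; omega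
  have hUS₁ : U ∪ {v} ⊆ S₁ := by
    rintro y (hy | rfl)
    · by_cases hyA : y ∈ A
      · exact hAT y hyA (hUT (Or.inl hy))
      · exact Set.mem_insert_of_mem _ (Or.inl ⟨hUS hy, hyA⟩)
    · exact Set.mem_insert _ _
  have hsub : S \ S₁ ⊆ S \ T := by
    rintro y ⟨hyS, hyS₁⟩
    have hyA : y ∈ A := by_contra fun h => hyS₁ (Set.mem_insert_of_mem v (Or.inl ⟨hyS, h⟩))
    exact ⟨hyS, fun hyT => hyS₁ (hAT y hyA hyT)⟩
  have heq : S \ S₁ = S \ T := Set.eq_of_subset_of_ncard_le hsub (hmin S₁ hS₁ (by omega) hUS₁)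
  obtain ⟨a, ha⟩ : A.Nonempty := Set.nonempty_of_ncard_ne_zero (by omega)
  obtain ⟨p, hpA, q, hq, hpq⟩ :=
    exists_adj_sdiff_of_induce_connected hSconn hAS ha ⟨hu, fun h => (hA h).2 rfl⟩
  by_cases hqT : q ∈ T
  · have hqB : q ∈ B := ⟨⟨hqT, fun h => hv (h ▸ hq.1)⟩, Set.mem_biUnion hpA
      (Set.mem_insert_of_mem p hpq)⟩
    exact hdisj.subset ⟨hq, hqB⟩
  · have : q ∈ S \ S₁ := heq ▸ ⟨hq.1, hqT⟩
    exact this.2 (Set.mem_insert_of_mem v (Or.inl hq))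

theorem exists_defends_of_induce_connected [Finite V] {S U : Set V} {u v : V} (hS : IsVC G S)
    (hScard : S.ncard = mvc G) (hSconn : (G.induce S).Connected) (huv : G.Adj u v) (hu : u ∈ S)
    (hv : v ∉ S) (hUS : U ⊆ S)
    (hext : ∃ T, IsVC G T ∧ T.ncard = mvc G ∧ U ∪ {v} ⊆ T) :
    ∃ T, (IsVC G T ∧ T.ncard = mvc G ∧ U ⊆ T) ∧ Defends G S T u v := by
  obtain ⟨T, ⟨hT, hTcard, hUT⟩, hmin⟩ := Set.exists_min_image
    {T | IsVC G T ∧ T.ncard = mvc G ∧ U ∪ {v} ⊆ T} (fun T => (S \ T).ncard) (Set.toFinite _)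
    hext
  have hall := hall_of_sdiff_minimal hS hScard hSconn hu hv hUS hT hUT
    fun T' h₁ h₂ h₃ => hmin T' ⟨h₁, h₂, h₃⟩
  refine ⟨T, ⟨hT, hTcard, Set.subset_union_left.trans hUT⟩, ?_⟩
  exact defends_of_hall (hScard.trans hTcard.symm) huv hu (hUT (Or.inr rfl)) hall

theorem isEvcClass_of_forall_exists_mvc [Finite V] {U : Set V} (hU : ∃ v, v ∉ U)
    (hSconn : ∀ S : Set V, IsVC G S → U ⊆ S → S.ncard = mvc G → (G.induce S).Connected)
    (hext : ∀ v, v ∉ U → ∃ S : Set V, IsVC G S ∧ S.ncard = mvc G ∧ U ∪ {v} ⊆ S) :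
    IsEvcClass G (mvc G) {S | IsVC G S ∧ S.ncard = mvc G ∧ U ⊆ S} := by
  refine ⟨?_, fun S ⟨hS, hScard, _⟩ => ⟨hS, Set.empty_subset S, hScard⟩, ?_⟩
  · obtain ⟨v, hv⟩ := hU
    obtain ⟨S, hS, hScard, hUS⟩ := hext v hv
    exact ⟨S, hS, hScard, Set.subset_union_left.trans hUS⟩
  rintro S ⟨hS, hScard, hUS⟩ u v huv
  have cross : ∀ u v, G.Adj u v → u ∈ S → v ∉ S →
      ∃ T ∈ {S | IsVC G S ∧ S.ncard = mvc G ∧ U ⊆ S}, Defends G S T u v :=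
    fun u v huv hu hv => exists_defends_of_induce_connected hS hScard (hSconn S hS hUS hScard)
      huv hu hv hUS (hext v fun h => hv (hUS h))
  by_cases hu : u ∈ S <;> by_cases hv : v ∈ S
  · exact ⟨S, ⟨hS, hScard, hUS⟩, defends_self huv hu hv⟩
  · exact cross u v huv hu hv
  · obtain ⟨T, hT, hmove⟩ := cross v u huv.symm hv hu
    exact ⟨T, hT, hmove.symm⟩
  · exact absurd (hS huv) (by tauto)

theorem exists_notMem_cutVertices [Finite V] [Nontrivial V] (hconn : G.Connected) :
    ∃ v, v ∉ cutVertices G := by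
  obtain ⟨v, hv⟩ := hconn.exists_connected_induce_compl_singleton_of_finite_nontrivial
  exact ⟨v, fun h => h.2 hv⟩

end EVC

open EVC SimpleGraph

/-- Characterization theorem. If every minimum vertex cover of `G` containing
all cut vertices induces a connected subgraph (class `F`), then `evc G = mvc G` iff every
non-cut vertex `v` lies in a minimum vertex cover containing `X ∪ {v}`, where `X` is the
set of cut vertices. -/
theorem evc_eq_mvc_characterization {V : Type*} [Finite V] [Nontrivial V]
    (G : SimpleGraph V) (hconn : G.Connected)
    (hF : ∀ S : Set V, IsVC G S → cutVertices G ⊆ S → S.ncard = mvc G →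
      (G.induce S).Connected) :
    evc G = mvc G ↔
      ∀ v : V, v ∉ cutVertices G →
        ∃ S : Set V, IsVC G S ∧ S.ncard = mvc G ∧ cutVertices G ∪ {v} ⊆ S := by
  constructor
  · intro heq v _
    obtain ⟨C, hC⟩ := exists_isEvcClass_evc G
    rw [heq] at hC
    obtain ⟨u, hvu⟩ := hconn.preconnected.exists_adj_of_nontrivial v
    obtain ⟨S, hS, hvS⟩ := hC.exists_mem_of_adj hvu.symm
    obtain ⟨hSvc, -, hScard⟩ := hC.2.1 S hS
    exact ⟨S, hSvc, hScard, Set.union_subset (cutVertices_subset_of_mem hconn hC hS)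
      (Set.singleton_subset_iff.mpr hvS)⟩
  · intro hext
    have hC := isEvcClass_of_forall_exists_mvc (exists_notMem_cutVertices hconn) hF hext
    exact le_antisymm (evc_le_of_isEvcClass hC) (mvc_le_evc G)
end

section
/- Let G' be obtained from a connected graph G by adding a new universal vertex adjacent to all vertices of G. Then G' is locally connected and mvc(G') = mvc(G) + 1. -/
open EVC SimpleGraph

/-- The graph obtained from `G` by adding a new vertex adjacent to all vertices of `G`. -/
def addUniversal {V : Type*} (G : SimpleGraph V) : SimpleGraph (Option V) :=
  SimpleGraph.fromRel (fun u v =>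
    u = none ∨ v = none ∨ ∃ a b : V, u = some a ∧ v = some b ∧ G.Adj a b)


section Helpers

variable {V : Type*} {G : SimpleGraph V}

lemma aU_none_some (v : V) : (addUniversal G).Adj none (some v) := by
  simp [addUniversal, SimpleGraph.fromRel_adj]

lemma aU_some_some {a b : V} : (addUniversal G).Adj (some a) (some b) ↔ G.Adj a b := by
  constructor
  · rintro ⟨hne, h | h⟩ <;> rcases h with h | h | ⟨a', b', ha, hb, hab⟩ <;>
      simp_all [adj_comm]
  · intro h
    exact ⟨by simp [h.ne], Or.inl (Or.inr (Or.inr ⟨a, b, rfl, rfl, h⟩))⟩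

lemma aU_adj_none_iff {x : Option V} : (addUniversal G).Adj none x ↔ ∃ v, x = some v := by
  cases x with
  | none => simp
  | some v => simp [aU_none_some]

lemma mvc_mem {W : Type*} [Finite W] (H : SimpleGraph W) :
    ∃ S : Set W, IsVC H S ∧ S.ncard = mvc H := by
  have h : {k | ∃ S : Set W, IsVC H S ∧ S.ncard = k}.Nonempty :=
    ⟨Nat.card W, Set.univ, fun u v _ => Or.inl trivial, Set.ncard_univ W⟩
  exact Nat.sInf_mem h

lemma mvc_le {W : Type*} (H : SimpleGraph W) {S : Set W} (h : IsVC H S) :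
    mvc H ≤ S.ncard := Nat.sInf_le ⟨S, h, rfl⟩

end Helpers

/-- Adding a universal vertex to a connected graph `G` (with at least two
vertices and an edge) yields a locally connected graph `G'` with `mvc G' = mvc G + 1`. -/
theorem addUniversal_locallyConnected_and_mvc {V : Type*} [Finite V] [Nontrivial V]
    (G : SimpleGraph V) (hconn : G.Connected) (hedge : G.edgeSet.Nonempty) :
    LocallyConnected (addUniversal G) ∧ mvc (addUniversal G) = mvc G + 1 := by
  haveI := Fintype.ofFinite V
  haveI : Finite (Option V) := Finite.of_fintype _
  constructor
  · -- locally connected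
    intro x
    cases x with
    | none =>
      refine hconn.map ⟨fun a => ⟨some a, aU_none_some a⟩, fun h => aU_some_some.mpr h⟩ ?_
      rintro ⟨x, hx⟩
      obtain ⟨v, rfl⟩ := aU_adj_none_iff.mp hx
      exact ⟨v, by apply Subtype.ext; rfl⟩
    | some a =>
      have hmem : (none : Option V) ∈ (addUniversal G).neighborSet (some a) :=
        (aU_none_some a).symm
      have key : ∀ z : ((addUniversal G).neighborSet (some a) : Set (Option V)),
          ((addUniversal G).induce ((addUniversal G).neighborSet (some a))).Reachable z
            ⟨none, hmem⟩ := by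
        rintro ⟨z, hz⟩
        cases z with
        | none => exact Reachable.refl _
        | some b =>
          exact Adj.reachable (by
            show (addUniversal G).Adj (some b) none
            exact (aU_none_some b).symm)
      haveI : Nonempty ((addUniversal G).neighborSet (some a) : Set (Option V)) :=
        ⟨⟨none, hmem⟩⟩
      exact ⟨fun x y => (key x).trans (key y).symm⟩
  · -- mvc
    apply le_antisymm
    · obtain ⟨S0, hS0, hcard⟩ := mvc_mem G
      have hvc : IsVC (addUniversal G) (insert none (some '' S0)) := by
        rintro (_ | a) (_ | b) h
        · exact absurd rfl h.ne
        · exact Or.inl (Set.mem_insert _ _)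
        · exact Or.inr (Set.mem_insert _ _)
        · rcases hS0 (aU_some_some.mp h) with ha | hb
          · exact Or.inl (Set.mem_insert_iff.mpr (Or.inr ⟨a, ha, rfl⟩))
          · exact Or.inr (Set.mem_insert_iff.mpr (Or.inr ⟨b, hb, rfl⟩))
      calc mvc (addUniversal G) ≤ (insert none (some '' S0)).ncard := mvc_le _ hvc
        _ = (some '' S0).ncard + 1 := Set.ncard_insert_of_notMem (by simp)
        _ = mvc G + 1 := by
            rw [Set.ncard_image_of_injective _ (Option.some_injective V), hcard]
    · obtain ⟨S', hS', hcard⟩ := mvc_mem (addUniversal G)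
      rw [← hcard]
      by_cases hn : (none : Option V) ∈ S'
      · have hT : IsVC G (some ⁻¹' S') := fun a b hab =>
          (hS' (aU_some_some.mpr hab)).imp id id
        have himg : some '' (some ⁻¹' S') = S' \ {none} := by
          ext x; cases x <;> simp [hn]
        have h1 : mvc G ≤ (S' \ {none}).ncard := by
          rw [← himg, Set.ncard_image_of_injective _ (Option.some_injective V)]
          exact mvc_le _ hT
        have h2 : (S' \ {none}).ncard + 1 = S'.ncard :=
          Set.ncard_diff_singleton_add_one hn
        omega
      · have hall : ∀ v : V, some v ∈ S' := fun v =>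
          (hS' (aU_none_some v)).resolve_left hn
        have hsub : Set.range (some : V → Option V) ⊆ S' := by
          rintro _ ⟨v, rfl⟩; exact hall v
        have h1 : Nat.card V ≤ S'.ncard := by
          calc Nat.card V = (Set.range (some : V → Option V)).ncard := by
                rw [← Set.image_univ, Set.ncard_image_of_injective _ (Option.some_injective V),
                  Set.ncard_univ]
            _ ≤ S'.ncard := Set.ncard_le_ncard hsub (Set.toFinite _)
        obtain ⟨v0⟩ := (inferInstance : Nonempty V)
        have hvc : IsVC G (Set.univ \ {v0}) := by
          intro u v h
          by_cases hu : u = v0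
          · exact Or.inr ⟨trivial, by subst hu; exact h.ne'⟩
          · exact Or.inl ⟨trivial, hu⟩
        have h2 : mvc G ≤ Nat.card V - 1 := by
          have := mvc_le _ hvc
          rwa [Set.ncard_diff_singleton_of_mem (Set.mem_univ v0), Set.ncard_univ] at this
        have h3 : 2 ≤ Nat.card V := Finite.one_lt_card
        omega
end
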